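/- arXiv:2508.05372 — 6 statements merged into one kernel-verified Lean document; each statement's English description precedes it below -/
import Mathlib

section
/- Let p ≥ 1 and j ≥ 1 be natural numbers, and let θ, θ' be real numbers with (j − 1/2)·π/(p+1) < θ < j·π/(p+2), (j + 1/2)·π/(p+1) < θ' < (j+1)·π/(p+2), and 0 ≤ θ ≤ θ' ≤ π/2. Then cos(θ) − cos(θ') ≥ 5/(2(p+2)²). -/
open Real

set_option maxHeartbeats 1000000 in
/-- Consecutive-node gap estimate for Gauss–Legendre node angles:
if `(j − 1/2)π/(p+1) < θ < jπ/(p+2)` and `(j + 1/2)π/(p+1) < θ' < (j+1)π/(p+2)`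
with `0 ≤ θ ≤ θ' ≤ π/2`, then `cos θ − cos θ' ≥ 5/(2(p+2)²)`. -/
theorem gauss_legendre_consecutive_gap (p j : ℕ) (hp : 1 ≤ p) (hj : 1 ≤ j)
    (θ θ' : ℝ)
    (hθl : ((j : ℝ) - 1 / 2) * π / ((p : ℝ) + 1) < θ)
    (hθu : θ < (j : ℝ) * π / ((p : ℝ) + 2))
    (hθ'l : ((j : ℝ) + 1 / 2) * π / ((p : ℝ) + 1) < θ')
    (hθ'u : θ' < ((j : ℝ) + 1) * π / ((p : ℝ) + 2))
    (h0 : 0 ≤ θ) (hle : θ ≤ θ') (hhalf : θ' ≤ π / 2) :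
    Real.cos θ - Real.cos θ' ≥ 5 / (2 * ((p : ℝ) + 2) ^ 2) := by
  have hP : (1 : ℝ) ≤ (p : ℝ) := by exact_mod_cast hp
  have hJ : (1 : ℝ) ≤ (j : ℝ) := by exact_mod_cast hj
  have hπ : (0 : ℝ) < π := Real.pi_pos
  set P : ℝ := (p : ℝ)
  set J : ℝ := (j : ℝ)
  have hP2 : (0 : ℝ) < P + 2 := by linarith
  have hP1 : (0 : ℝ) < P + 1 := by linarith
  set A : ℝ := J * π / (P + 2) with hAdef
  set B : ℝ := (J + 1 / 2) * π / (P + 1) with hBdef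
  have hA0 : 0 ≤ A := by positivity
  have hB0 : 0 < B := by positivity
  have hAB : A < B := by
    rw [hAdef, hBdef, div_lt_div_iff₀ hP2 hP1]
    nlinarith [hπ, hJ, hP]
  have hBθ' : B ≤ θ' := le_of_lt hθ'l
  have hBhalf : B ≤ π / 2 := hBθ'.trans hhalf
  have hθA : θ ≤ A := le_of_lt hθu
  have hApi : A ≤ π := by nlinarith
  have hθ'pi : θ' ≤ π := by nlinarith
  have hcos1 : Real.cos A ≤ Real.cos θ :=
    Real.cos_le_cos_of_nonneg_of_le_pi h0 hApi hθA
  have hcos2 : Real.cos θ' ≤ Real.cos B :=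
    Real.cos_le_cos_of_nonneg_of_le_pi hB0.le hθ'pi hBθ'
  have hid : Real.cos A - Real.cos B
      = 2 * Real.sin ((A + B) / 2) * Real.sin ((B - A) / 2) := by
    rw [Real.cos_sub_cos]
    have h : (A - B) / 2 = -((B - A) / 2) := by ring
    rw [h, Real.sin_neg]; ring
  have hs1 : 2 / π * ((A + B) / 2) ≤ Real.sin ((A + B) / 2) :=
    Real.mul_le_sin (by linarith) (by linarith)
  have hs2 : 2 / π * ((B - A) / 2) ≤ Real.sin ((B - A) / 2) :=
    Real.mul_le_sin (by linarith) (by linarith)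
  have hkey : 2 * (2 / π * ((A + B) / 2)) * (2 / π * ((B - A) / 2))
      ≤ Real.cos A - Real.cos B := by
    rw [hid]
    have h1 : 0 ≤ 2 / π * ((A + B) / 2) := by positivity
    have h2 : 0 ≤ 2 / π * ((B - A) / 2) :=
      mul_nonneg (by positivity) (by linarith)
    nlinarith [hs1, hs2]
  have hval : 2 * (2 / π * ((A + B) / 2)) * (2 / π * ((B - A) / 2))
      = 2 * ((J + 1 / 2)^2 / (P + 1)^2 - J^2 / (P + 2)^2) := by
    rw [hAdef, hBdef]
    field_simp
    ring
  have hfin : 5 / (2 * (P + 2) ^ 2) ≤ 2 * ((J + 1 / 2)^2 / (P + 1)^2 - J^2 / (P + 2)^2) := by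
    rw [div_le_iff₀ (by positivity)]
    have e : 2 * ((J + 1 / 2)^2 / (P + 1)^2 - J^2 / (P + 2)^2)
        = (2 * ((J + 1 / 2)^2 * (P + 2)^2 - J^2 * (P + 1)^2)) / ((P + 1)^2 * (P + 2)^2) := by
      field_simp
    rw [e, div_mul_eq_mul_div, le_div_iff₀ (by positivity)]
    have h4 : 5 * (P + 1) ^ 2 ≤ 4 * ((J + 1 / 2) ^ 2 * (P + 2) ^ 2 - J ^ 2 * (P + 1) ^ 2) := by
      nlinarith [mul_nonneg (mul_nonneg (sub_nonneg.2 hJ) (by linarith : (0:ℝ) ≤ J + 1)) (by linarith : (0:ℝ) ≤ 2 * P + 3), mul_nonneg (sub_nonneg.2 hJ) (sq_nonneg (P + 2)), hP, hJ]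
    nlinarith [mul_le_mul_of_nonneg_right h4 (sq_nonneg (P + 2))]
  calc Real.cos θ - Real.cos θ' ≥ Real.cos A - Real.cos B := by linarith
    _ ≥ 2 * (2 / π * ((A + B) / 2)) * (2 / π * ((B - A) / 2)) := hkey
    _ = 2 * ((J + 1 / 2)^2 / (P + 1)^2 - J^2 / (P + 2)^2) := hval
    _ ≥ 5 / (2 * (P + 2) ^ 2) := hfin
end

section
/- Let p ≥ 1 be a natural number and let θ be a real number with 0 ≤ θ ≤ p·π/(2(p+2)). Then cos(θ) ≥ (2p+2)/(p+2)², and in particular cos(θ) ≥ 1/(p+2). -/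
open Real

/-- Middle-node estimate for Gauss–Legendre angles: if `0 ≤ θ ≤ pπ/(2(p+2))`,
then `cos θ ≥ (2p+2)/(p+2)²` and in particular `cos θ ≥ 1/(p+2)`. -/
theorem gauss_legendre_middle_node (p : ℕ) (hp : 1 ≤ p) (θ : ℝ)
    (h0 : 0 ≤ θ) (hθ : θ ≤ (p : ℝ) * π / (2 * ((p : ℝ) + 2))) :
    Real.cos θ ≥ (2 * (p : ℝ) + 2) / ((p : ℝ) + 2) ^ 2 ∧
    Real.cos θ ≥ 1 / ((p : ℝ) + 2) := by
  have hpR : (1 : ℝ) ≤ (p : ℝ) := by exact_mod_cast hp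
  have hπ := pi_pos
  have hp2 : (0 : ℝ) < (p : ℝ) + 2 := by linarith
  set a : ℝ := π / ((p : ℝ) + 2) with ha
  have ha0 : 0 ≤ a := by positivity
  have haπ : a ≤ π / 2 := by
    rw [div_le_div_iff₀ hp2 (by norm_num)]
    nlinarith
  have hb : (p : ℝ) * π / (2 * ((p : ℝ) + 2)) = π / 2 - a := by
    field_simp [ha]
    have hap : a * ((p : ℝ) + 2) = π := by rw [ha]; exact div_mul_cancel₀ π hp2.ne'
    linear_combination 2 * hap
  have hcos : Real.cos (π / 2 - a) ≤ Real.cos θ := by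
    apply Real.cos_le_cos_of_nonneg_of_le_pi h0
    · linarith [hb ▸ hθ]
    · rw [← hb]; exact hθ
  rw [Real.cos_pi_div_two_sub] at hcos
  have hsin : 2 / ((p : ℝ) + 2) ≤ Real.sin a := by
    have := Real.mul_le_sin ha0 haπ
    calc 2 / ((p : ℝ) + 2) = 2 / π * a := by
          rw [ha]; field_simp
      _ ≤ Real.sin a := this
  have key : Real.cos θ ≥ 2 / ((p : ℝ) + 2) := le_trans hsin hcos
  constructor
  · refine le_trans ?_ key
    rw [div_le_div_iff₀ (by positivity) hp2]
    nlinarith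
  · refine le_trans ?_ key
    rw [div_le_div_iff₀ hp2 hp2]
    linarith
end

section
/- Let p ≥ 1 and j ≥ 1 be natural numbers, and let θ, θ' be real numbers with j·π/p < θ < (j+1)·π/(p+1), (j+1)·π/p < θ' < (j+2)·π/(p+1), and 0 ≤ θ ≤ θ' ≤ π/2. Then cos(θ) − cos(θ') ≥ 16/(p+1)³. -/
open Real

set_option maxHeartbeats 1000000 in
/-- Consecutive interior-node gap estimate for Gauss–Lobatto–Legendre node angles:
if `jπ/p < θ < (j+1)π/(p+1)` and `(j+1)π/p < θ' < (j+2)π/(p+1)` with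
`0 ≤ θ ≤ θ' ≤ π/2`, then `cos θ − cos θ' ≥ 16/(p+1)³`. -/
theorem gauss_lobatto_consecutive_gap (p j : ℕ) (hp : 1 ≤ p) (hj : 1 ≤ j)
    (θ θ' : ℝ)
    (hθl : (j : ℝ) * π / (p : ℝ) < θ)
    (hθu : θ < ((j : ℝ) + 1) * π / ((p : ℝ) + 1))
    (hθ'l : ((j : ℝ) + 1) * π / (p : ℝ) < θ')
    (hθ'u : θ' < ((j : ℝ) + 2) * π / ((p : ℝ) + 1))
    (h0 : 0 ≤ θ) (hle : θ ≤ θ') (hhalf : θ' ≤ π / 2) :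
    Real.cos θ - Real.cos θ' ≥ 16 / ((p : ℝ) + 1) ^ 3 := by
  have hπ3 : (3:ℝ) < π := Real.pi_gt_three
  have hπ4 : π ≤ 4 := Real.pi_le_four
  have hπ0 : (0:ℝ) < π := Real.pi_pos
  have hP1 : (1:ℝ) ≤ (p:ℝ) := by exact_mod_cast hp
  have hP0 : (0:ℝ) < (p:ℝ) := by linarith
  have hK2 : (2:ℝ) ≤ (j:ℝ) + 1 := by
    have : (1:ℝ) ≤ (j:ℝ) := by exact_mod_cast hj
    linarith
  set P : ℝ := (p:ℝ) with hPdef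
  set K : ℝ := (j:ℝ) + 1 with hKdef
  set x₁ : ℝ := K * π / (P + 1) with hx1def
  set x₂ : ℝ := K * π / P with hx2def
  set M : ℝ := K * π * (2 * P + 1) / (2 * P * (P + 1)) with hMdef
  set D : ℝ := K * π / (2 * P * (P + 1)) with hDdef
  clear_value P K x₁ x₂ M D
  have hK0 : (0:ℝ) < K := by linarith
  -- from (j+1)π/p < θ' ≤ π/2 deduce 2K < P
  have h2K : 2 * K < P := by
    have h1 : x₂ < π / 2 := lt_of_lt_of_le hθ'l hhalf
    rw [hx2def, div_lt_iff₀ hP0] at h1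
    nlinarith [h1, hπ0]
  have hden : (0:ℝ) < 2 * P * (P + 1) := by nlinarith
  have hP1pos : (0:ℝ) < P + 1 := by linarith
  -- endpoints
  have hx1pi : x₁ ≤ π := by
    rw [hx1def, div_le_iff₀ hP1pos]
    nlinarith
  have hx2nonneg : (0:ℝ) ≤ x₂ := by
    rw [hx2def]
    positivity
  have hθ'pi : θ' ≤ π := by linarith
  have hc1 : Real.cos x₁ < Real.cos θ :=
    Real.cos_lt_cos_of_nonneg_of_le_pi h0 hx1pi hθu
  have hc2 : Real.cos θ' < Real.cos x₂ :=
    Real.cos_lt_cos_of_nonneg_of_le_pi hx2nonneg hθ'pi hθ'l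
  -- midpoint and half-gap
  have hMeq : (x₁ + x₂) / 2 = M := by
    rw [hx1def, hx2def, hMdef]
    field_simp
    ring
  have hDeq : (x₁ - x₂) / 2 = -D := by
    rw [hx1def, hx2def, hDdef]
    field_simp
    ring
  have key : Real.cos x₁ - Real.cos x₂ = 2 * Real.sin M * Real.sin D := by
    rw [Real.cos_sub_cos, hMeq, hDeq, Real.sin_neg]
    ring
  -- bounds on M
  have hM0 : (0:ℝ) ≤ M := by
    rw [hMdef]
    have : (0:ℝ) ≤ K * π * (2 * P + 1) := by positivity
    positivity
  have hMhalf : M ≤ π / 2 := by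
    rw [hMdef, div_le_iff₀ hden]
    nlinarith [mul_lt_mul_of_pos_left h2K (mul_pos hπ0 (show (0:ℝ) < 2 * P + 1 by linarith)), mul_pos hπ0 hP0]
  have hsinM : 2 * K / (P + 1) ≤ Real.sin M := by
    have h1 := Real.mul_le_sin hM0 hMhalf
    have h2 : 2 / π * M = K * (2 * P + 1) / (P * (P + 1)) := by
      rw [hMdef]; field_simp
    have h3 : 2 * K / (P + 1) ≤ K * (2 * P + 1) / (P * (P + 1)) := by
      rw [div_le_div_iff₀ hP1pos (by positivity)]
      nlinarith
    linarith [h2 ▸ h1]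
  -- bounds on D
  have hD0 : (0:ℝ) < D := by
    rw [hDdef]
    exact div_pos (by positivity) hden
  have hD1 : D ≤ 1 := by
    rw [hDdef, div_le_one hden]
    nlinarith
  have hsinD : 3 / 4 * D ≤ Real.sin D := by
    have h1 := Real.sin_gt_sub_cube hD0
    have h2 : 0 ≤ D * (1 - D) * (1 + D) :=
      mul_nonneg (mul_nonneg hD0.le (by linarith)) (by linarith)
    nlinarith [h1, h2]
  -- combine
  have ha0 : (0:ℝ) ≤ 2 * K / (P + 1) := by positivity
  have hb0 : (0:ℝ) ≤ 3 / 4 * D := by linarith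
  have hprod : (2 * K / (P + 1)) * (3 / 4 * D) ≤ Real.sin M * Real.sin D :=
    mul_le_mul hsinM hsinD hb0 (le_trans ha0 hsinM)
  have hval : 2 * ((2 * K / (P + 1)) * (3 / 4 * D)) = 3 * K ^ 2 * π / (2 * P * (P + 1) ^ 2) := by
    rw [hDdef]; field_simp; ring
  have hfin : 16 / (P + 1) ^ 3 ≤ 3 * K ^ 2 * π / (2 * P * (P + 1) ^ 2) := by
    rw [div_le_div_iff₀ (by positivity) (by positivity)]
    have h36 : (36:ℝ) ≤ 3 * K ^ 2 * π := by nlinarith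
    have h32 : (32:ℝ) * P ≤ 36 * (P + 1) := by linarith
    nlinarith [mul_le_mul_of_nonneg_right h32 (sq_nonneg (P + 1)),
      mul_le_mul_of_nonneg_right h36 (pow_nonneg hP1pos.le 3)]
  linarith [hc1, hc2, key, hprod, hval, hfin]
end

section
/- Let p ≥ 1 be a natural number, δ > 0, λ ≥ 0 and R > 0 real numbers. Let x_0, …, x_p be distinct points in [−1, 1] with |x_i − x_m| ≥ δ for all i ≠ m, let l_j be the associated Lagrange basis polynomials, let ω_0, …, ω_p > 0 be weights with ω_i/ω_j ≤ R for all i, j, and let ξ_0, …, ξ_p be points in [1, 1 + 2λ]. Then for every u ∈ ℝ^{p+1}: Σ_{j=0}^{p} ω_j·(Σ_{i=0}^{p} u_i·l_i(ξ_j))² ≤ R·(p+1)²·((2 + 2λ)/δ)^{2p} · Σ_{i=0}^{p} ω_i·u_i². -/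
open Real Finset

/-- The Lagrange basis polynomial `l_j` associated to the nodes `x`, evaluated at `t`:
`l_j(t) = ∏_{m ≠ j} (t − x_m)/(x_j − x_m)`. -/
noncomputable def lagrangeBasis {n : ℕ} (x : Fin n → ℝ) (j : Fin n) (t : ℝ) : ℝ :=
  ∏ m ∈ Finset.univ.erase j, (t - x m) / (x j - x m)

/-- Weighted-norm estimate for the extension operator (Lemma 4.1): for nodes in
`[−1,1]` separated by at least `δ`, weights with pairwise ratio at most `R`, and
evaluation points `ξ_j ∈ [1, 1+2λ]`, the discrete mass-matrix norm of the
extrapolated nodal vector is controlled: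
`Σ_j ω_j (Σ_i u_i l_i(ξ_j))² ≤ R (p+1)² ((2+2λ)/δ)^{2p} Σ_i ω_i u_i²`. -/
theorem extension_operator_weighted_bound (p : ℕ) (hp : 1 ≤ p)
    (δ lam R : ℝ) (hδ : 0 < δ) (hlam : 0 ≤ lam) (hR : 0 < R)
    (x : Fin (p + 1) → ℝ)
    (hrange : ∀ i, x i ∈ Set.Icc (-1 : ℝ) 1)
    (hsep : ∀ i m : Fin (p + 1), i ≠ m → δ ≤ |x i - x m|)
    (ω : Fin (p + 1) → ℝ) (hω : ∀ i, 0 < ω i)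
    (hratio : ∀ i j : Fin (p + 1), ω i / ω j ≤ R)
    (ξ : Fin (p + 1) → ℝ) (hξ : ∀ j, ξ j ∈ Set.Icc (1 : ℝ) (1 + 2 * lam)) :
    ∀ u : Fin (p + 1) → ℝ,
      ∑ j, ω j * (∑ i, u i * lagrangeBasis x i (ξ j)) ^ 2 ≤
        R * ((p : ℝ) + 1) ^ 2 * ((2 + 2 * lam) / δ) ^ (2 * p) * ∑ i, ω i * u i ^ 2 := by
  intro u
  set M := (2 + 2 * lam) / δ with hMdef
  have hMpos : 0 < M := div_pos (by linarith) hδ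
  have hlb : ∀ i j, |lagrangeBasis x i (ξ j)| ≤ M ^ p := by
    intro i j
    rw [lagrangeBasis, Finset.abs_prod]
    have : ∏ m ∈ Finset.univ.erase i, |(ξ j - x m) / (x i - x m)| ≤
        ∏ _m ∈ Finset.univ.erase i, M := by
      apply Finset.prod_le_prod (fun m _ => abs_nonneg _)
      intro m hm
      have hmi : i ≠ m := fun h => (Finset.mem_erase.mp hm).1 h.symm
      have h1 : |ξ j - x m| ≤ 2 + 2 * lam := by
        rcases hξ j with ⟨ha, hb⟩
        rcases hrange m with ⟨hc, hd⟩
        rw [abs_le]; constructor <;> linarith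
      rw [abs_div]
      exact div_le_div₀ (by linarith) h1 hδ (hsep i m hmi)
    calc ∏ m ∈ Finset.univ.erase i, |(ξ j - x m) / (x i - x m)|
        ≤ ∏ _m ∈ Finset.univ.erase i, M := this
      _ = M ^ p := by
          rw [Finset.prod_const, Finset.card_erase_of_mem (Finset.mem_univ i),
            Finset.card_univ, Fintype.card_fin, Nat.add_sub_cancel]
  have hU : 0 ≤ ∑ i, u i ^ 2 := Finset.sum_nonneg fun i _ => sq_nonneg _
  have key : ∀ j, ω j * (∑ i, u i * lagrangeBasis x i (ξ j)) ^ 2 ≤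
      ((p : ℝ) + 1) * M ^ (2 * p) * (R * ∑ i, ω i * u i ^ 2) := by
    intro j
    have hCS : (∑ i, u i * lagrangeBasis x i (ξ j)) ^ 2 ≤
        (∑ i, u i ^ 2) * ∑ i, (lagrangeBasis x i (ξ j)) ^ 2 :=
      Finset.sum_mul_sq_le_sq_mul_sq _ _ _
    have hL : ∑ i, (lagrangeBasis x i (ξ j)) ^ 2 ≤ ((p : ℝ) + 1) * M ^ (2 * p) := by
      calc ∑ i : Fin (p + 1), (lagrangeBasis x i (ξ j)) ^ 2
          ≤ ∑ _i : Fin (p + 1), M ^ (2 * p) := by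
            apply Finset.sum_le_sum
            intro i _
            have := hlb i j
            calc (lagrangeBasis x i (ξ j)) ^ 2 = |lagrangeBasis x i (ξ j)| ^ 2 := (sq_abs _).symm
              _ ≤ (M ^ p) ^ 2 := pow_le_pow_left₀ (abs_nonneg _) this 2
              _ = M ^ (2 * p) := by rw [← pow_mul, mul_comm]
        _ = ((p : ℝ) + 1) * M ^ (2 * p) := by
            rw [Finset.sum_const, Finset.card_univ, Fintype.card_fin, nsmul_eq_mul]
            push_cast; ring
    have step1 : ω j * (∑ i, u i * lagrangeBasis x i (ξ j)) ^ 2 ≤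
        ((p : ℝ) + 1) * M ^ (2 * p) * (ω j * ∑ i, u i ^ 2) := by
      have h2 : (∑ i, u i * lagrangeBasis x i (ξ j)) ^ 2 ≤
          ((p : ℝ) + 1) * M ^ (2 * p) * ∑ i, u i ^ 2 := by
        calc (∑ i, u i * lagrangeBasis x i (ξ j)) ^ 2
            ≤ (∑ i, u i ^ 2) * ∑ i, (lagrangeBasis x i (ξ j)) ^ 2 := hCS
          _ ≤ (∑ i, u i ^ 2) * (((p : ℝ) + 1) * M ^ (2 * p)) :=
              mul_le_mul_of_nonneg_left hL hU
          _ = ((p : ℝ) + 1) * M ^ (2 * p) * ∑ i, u i ^ 2 := by ring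
      calc ω j * (∑ i, u i * lagrangeBasis x i (ξ j)) ^ 2
          ≤ ω j * (((p : ℝ) + 1) * M ^ (2 * p) * ∑ i, u i ^ 2) :=
            mul_le_mul_of_nonneg_left h2 (hω j).le
        _ = ((p : ℝ) + 1) * M ^ (2 * p) * (ω j * ∑ i, u i ^ 2) := by ring
    have step2 : ω j * ∑ i, u i ^ 2 ≤ R * ∑ i, ω i * u i ^ 2 := by
      rw [Finset.mul_sum, Finset.mul_sum]
      apply Finset.sum_le_sum
      intro i _
      have : ω j ≤ R * ω i := by
        have := hratio j i
        rw [div_le_iff₀ (hω i)] at this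
        linarith
      have := mul_le_mul_of_nonneg_right this (sq_nonneg (u i))
      linarith
    calc ω j * (∑ i, u i * lagrangeBasis x i (ξ j)) ^ 2
        ≤ ((p : ℝ) + 1) * M ^ (2 * p) * (ω j * ∑ i, u i ^ 2) := step1
      _ ≤ ((p : ℝ) + 1) * M ^ (2 * p) * (R * ∑ i, ω i * u i ^ 2) :=
          mul_le_mul_of_nonneg_left step2 (by positivity)
  calc ∑ j, ω j * (∑ i, u i * lagrangeBasis x i (ξ j)) ^ 2
      ≤ ∑ _j : Fin (p + 1), ((p : ℝ) + 1) * M ^ (2 * p) * (R * ∑ i, ω i * u i ^ 2) :=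
        Finset.sum_le_sum fun j _ => key j
    _ = R * ((p : ℝ) + 1) ^ 2 * M ^ (2 * p) * ∑ i, ω i * u i ^ 2 := by
        rw [Finset.sum_const, Finset.card_univ, Fintype.card_fin, nsmul_eq_mul]
        push_cast; ring
end

section
/- Let p ≥ 1 be a natural number, let x_0, …, x_p be distinct points in [−1, 1], let l_k be the associated Lagrange basis polynomials, and define the derivative matrix D by D_{ij} = l_j'(x_i) and, for α ∈ ℝ, the extrapolation matrix 𝕀(α) by 𝕀(α)_{jk} = l_k(1 + α·(1 + x_j)). Then there exists a constant C ≥ 0 (depending only on the nodes) such that for all α ∈ [0, 1/2] and all u ∈ ℝ^{p+1}: ‖D·𝕀(α)·u‖₂ ≤ C·α·‖u‖₂, where ‖·‖₂ is the Euclidean norm. -/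
open Real Finset Matrix

/-- The collocation derivative matrix `D_{ij} = l_j'(x_i)`. -/
noncomputable def derivMatrix {n : ℕ} (x : Fin n → ℝ) : Matrix (Fin n) (Fin n) ℝ :=
  fun i j => deriv (lagrangeBasis x j) (x i)

/-- The extrapolation matrix `𝕀(α)_{jk} = l_k(1 + α(1 + x_j))`. -/
noncomputable def extrapMatrix {n : ℕ} (x : Fin n → ℝ) (α : ℝ) :
    Matrix (Fin n) (Fin n) ℝ :=
  fun j k => lagrangeBasis x k (1 + α * (1 + x j))

/-- `lagrangeBasis` agrees with the evaluation of Mathlib's Lagrange basis polynomial. -/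
lemma lagrangeBasis_eq_eval {n : ℕ} (x : Fin n → ℝ) (j : Fin n) (t : ℝ) :
    lagrangeBasis x j t = (Lagrange.basis Finset.univ x j).eval t := by
  rw [Lagrange.basis, Polynomial.eval_prod, lagrangeBasis]
  refine Finset.prod_congr rfl fun m _ => ?_
  simp [Lagrange.basisDivisor, div_eq_inv_mul]

/-- Lemma 4.2: the Euclidean operator norm of `D ⬝ 𝕀(α)` is proportional to the
cut-cell factor `α`: there is a constant `C ≥ 0` (depending only on the nodes)
with `‖D·𝕀(α)·u‖₂ ≤ C α ‖u‖₂` for all `α ∈ [0, 1/2]` and all `u`. -/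
theorem derivMatrix_extrap_prop_alpha (p : ℕ) (hp : 1 ≤ p)
    (x : Fin (p + 1) → ℝ) (hx : Function.Injective x)
    (hrange : ∀ i, x i ∈ Set.Icc (-1 : ℝ) 1) :
    ∃ C : ℝ, 0 ≤ C ∧ ∀ α ∈ Set.Icc (0 : ℝ) (1 / 2), ∀ u : Fin (p + 1) → ℝ,
      Real.sqrt (∑ i, (((derivMatrix x * extrapMatrix x α) *ᵥ u) i) ^ 2) ≤
        C * α * Real.sqrt (∑ i, (u i) ^ 2) := by
  classical
  -- partition of unity and the negative sum property of D
  have hsum : ∑ j : Fin (p+1), Lagrange.basis Finset.univ x j = 1 :=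
    Lagrange.sum_basis hx.injOn Finset.univ_nonempty
  have hrowsum : ∀ t : ℝ, ∑ j : Fin (p+1), deriv (lagrangeBasis x j) t = 0 := by
    intro t
    have h1 : ∀ j : Fin (p+1), deriv (lagrangeBasis x j) t
        = (Polynomial.derivative (Lagrange.basis Finset.univ x j)).eval t := by
      intro j
      have hfe : lagrangeBasis x j = fun s => (Lagrange.basis Finset.univ x j).eval s :=
        funext fun s => lagrangeBasis_eq_eval x j s
      rw [hfe, Polynomial.deriv]
    simp_rw [h1]
    rw [← Polynomial.eval_finset_sum, ← map_sum, hsum]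
    simp
  -- each entry of D·𝕀(α) is bounded by a constant times α
  have key : ∀ i k : Fin (p+1), ∃ L : ℝ, 0 ≤ L ∧ ∀ α ∈ Set.Icc (0:ℝ) (1/2),
      |(derivMatrix x * extrapMatrix x α) i k| ≤ L * α := by
    intro i k
    set P : Polynomial ℝ := ∑ j : Fin (p+1), Polynomial.C (derivMatrix x i j) *
      (Lagrange.basis Finset.univ x k).comp
        (Polynomial.C 1 + Polynomial.C (1 + x j) * Polynomial.X) with hP
    have hPeval : ∀ α : ℝ, (derivMatrix x * extrapMatrix x α) i k = P.eval α := by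
      intro α
      rw [Matrix.mul_apply, hP, Polynomial.eval_finset_sum]
      refine Finset.sum_congr rfl fun j _ => ?_
      rw [Polynomial.eval_mul, Polynomial.eval_C, Polynomial.eval_comp]
      have harg : Polynomial.eval α (Polynomial.C (1:ℝ) + Polynomial.C (1 + x j) * Polynomial.X)
          = 1 + α * (1 + x j) := by simp [mul_comm]
      rw [harg]
      simp [extrapMatrix, lagrangeBasis_eq_eval]
    have hP0 : P.eval 0 = 0 := by
      rw [hP, Polynomial.eval_finset_sum]
      have h0 : ∀ j : Fin (p+1), Polynomial.eval 0 (Polynomial.C (derivMatrix x i j) *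
          (Lagrange.basis Finset.univ x k).comp
            (Polynomial.C 1 + Polynomial.C (1 + x j) * Polynomial.X))
          = derivMatrix x i j * (Lagrange.basis Finset.univ x k).eval 1 := by
        intro j; simp
      rw [Finset.sum_congr rfl fun j _ => h0 j, ← Finset.sum_mul]
      have hz : ∑ j : Fin (p+1), derivMatrix x i j = 0 := hrowsum (x i)
      rw [hz, zero_mul]
    obtain ⟨Q, hQ⟩ : Polynomial.X ∣ P :=
      Polynomial.X_dvd_iff.mpr (by rw [Polynomial.coeff_zero_eq_eval_zero]; exact hP0)
    obtain ⟨B, hB⟩ := (isCompact_Icc (a := (0:ℝ)) (b := 1/2)).exists_bound_of_continuousOn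
      (Polynomial.continuous Q).continuousOn
    refine ⟨max B 0, le_max_right _ _, fun α hα => ?_⟩
    rw [hPeval α, hQ, Polynomial.eval_mul, Polynomial.eval_X, abs_mul,
      abs_of_nonneg hα.1, mul_comm]
    have hBα : |Q.eval α| ≤ max B 0 :=
      le_trans (by simpa using hB α hα) (le_max_left _ _)
    exact mul_le_mul_of_nonneg_right hBα hα.1
  choose L hL0 hLb using key
  set Ltot : ℝ := ∑ i, ∑ k, L i k with hLtot
  have hLtot0 : 0 ≤ Ltot :=
    Finset.sum_nonneg fun i _ => Finset.sum_nonneg fun k _ => hL0 i k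
  have hLle : ∀ i k : Fin (p+1), L i k ≤ Ltot := by
    intro i k
    have h1 : L i k ≤ ∑ k', L i k' :=
      Finset.single_le_sum (fun k' _ => hL0 i k') (Finset.mem_univ k)
    exact h1.trans (Finset.single_le_sum
      (fun i' _ => Finset.sum_nonneg fun k' _ => hL0 i' k') (Finset.mem_univ i))
  refine ⟨((p:ℝ)+1) * Ltot, by positivity, fun α hα u => ?_⟩
  have hα0 := hα.1
  set M := derivMatrix x * extrapMatrix x α with hM
  have hentry : ∀ i k, (M i k)^2 ≤ (Ltot * α)^2 := by
    intro i k
    have h1 : |M i k| ≤ Ltot * α :=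
      (hLb i k α hα).trans (mul_le_mul_of_nonneg_right (hLle i k) hα0)
    calc (M i k)^2 = |M i k|^2 := (sq_abs _).symm
    _ ≤ (Ltot*α)^2 := pow_le_pow_left₀ (abs_nonneg _) h1 2
  have hrow : ∀ i, ((M *ᵥ u) i)^2 ≤ (((p:ℝ)+1) * (Ltot*α)^2) * (∑ k, (u k)^2) := by
    intro i
    have hmv : (M *ᵥ u) i = ∑ k, M i k * u k := rfl
    rw [hmv]
    refine (Finset.sum_mul_sq_le_sq_mul_sq Finset.univ (fun k => M i k) u).trans ?_
    have h2 : ∑ k, (M i k)^2 ≤ ((p:ℝ)+1) * (Ltot*α)^2 := by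
      have := Finset.sum_le_sum fun k (_ : k ∈ Finset.univ) => hentry i k
      simpa [Finset.sum_const, Finset.card_univ, nsmul_eq_mul] using this
    exact mul_le_mul_of_nonneg_right h2
      (Finset.sum_nonneg fun k _ => sq_nonneg _)
  have htot : ∑ i, ((M *ᵥ u) i)^2 ≤ (((p:ℝ)+1)*Ltot*α)^2 * ∑ k, (u k)^2 := by
    calc ∑ i, ((M *ᵥ u) i)^2
        ≤ ∑ _i : Fin (p+1), (((p:ℝ)+1) * (Ltot*α)^2) * ∑ k, (u k)^2 :=
          Finset.sum_le_sum fun i _ => hrow i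
      _ = (((p:ℝ)+1)*Ltot*α)^2 * ∑ k, (u k)^2 := by
          simp [Finset.sum_const, Finset.card_univ, nsmul_eq_mul]; ring
  calc Real.sqrt (∑ i, ((M *ᵥ u) i)^2)
      ≤ Real.sqrt ((((p:ℝ)+1)*Ltot*α)^2 * ∑ k, (u k)^2) := Real.sqrt_le_sqrt htot
    _ = (((p:ℝ)+1)*Ltot*α) * Real.sqrt (∑ k, (u k)^2) := by
        rw [Real.sqrt_mul (sq_nonneg _), Real.sqrt_sq (by positivity)]
    _ = ((p:ℝ)+1) * Ltot * α * Real.sqrt (∑ i, (u i)^2) := by ring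
end

section
/- Let p ≥ 1 be a natural number, δ > 0, λ ≥ 0 and m > 0 real numbers. Let x_0, …, x_p be distinct points in [−1, 1] with |x_i − x_j| ≥ δ for all i ≠ j, let l_i be the associated Lagrange basis polynomials, and let ω_0, …, ω_p be weights with ω_i ≥ m for all i. Then for every ξ ∈ [1, 1 + 2λ] and every u ∈ ℝ^{p+1}: (Σ_{i=0}^{p} u_i·l_i(ξ))² ≤ ((p+1)/m)·((2 + 2λ)/δ)^{2p} · Σ_{i=0}^{p} ω_i·u_i². -/
open Real Finset

/-- Single-point extrapolation bound (core estimate of Lemma 4.3): for nodes in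
`[−1,1]` separated by at least `δ`, weights bounded below by `m > 0`, and
`ξ ∈ [1, 1+2λ]`, one has
`(Σ_i u_i l_i(ξ))² ≤ ((p+1)/m) ((2+2λ)/δ)^{2p} Σ_i ω_i u_i²`. -/
theorem single_point_extrapolation_bound (p : ℕ) (hp : 1 ≤ p)
    (δ lam mw : ℝ) (hδ : 0 < δ) (hlam : 0 ≤ lam) (hmw : 0 < mw)
    (x : Fin (p + 1) → ℝ)
    (hrange : ∀ i, x i ∈ Set.Icc (-1 : ℝ) 1)
    (hsep : ∀ i j : Fin (p + 1), i ≠ j → δ ≤ |x i - x j|)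
    (ω : Fin (p + 1) → ℝ) (hω : ∀ i, mw ≤ ω i)
    (ξ : ℝ) (hξ : ξ ∈ Set.Icc (1 : ℝ) (1 + 2 * lam)) :
    ∀ u : Fin (p + 1) → ℝ,
      (∑ i, u i * lagrangeBasis x i ξ) ^ 2 ≤
        (((p : ℝ) + 1) / mw) * ((2 + 2 * lam) / δ) ^ (2 * p) * ∑ i, ω i * u i ^ 2 := by
  intro u
  set M : ℝ := (2 + 2 * lam) / δ with hM
  have hM0 : 0 ≤ M := by positivity
  have hξ1 := hξ.1
  have hξ2 := hξ.2
  -- bound each Lagrange basis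
  have hlb : ∀ i, |lagrangeBasis x i ξ| ≤ M ^ p := by
    intro i
    have : |lagrangeBasis x i ξ| = ∏ m ∈ Finset.univ.erase i, |(ξ - x m) / (x i - x m)| := by
      rw [lagrangeBasis, Finset.abs_prod]
    rw [this]
    have hcard : (Finset.univ.erase i).card = p := by
      rw [Finset.card_erase_of_mem (Finset.mem_univ i), Finset.card_univ, Fintype.card_fin]
      rfl
    calc ∏ m ∈ Finset.univ.erase i, |(ξ - x m) / (x i - x m)|
        ≤ ∏ m ∈ Finset.univ.erase i, M := by
          apply Finset.prod_le_prod (fun _ _ => abs_nonneg _)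
          intro m hm
          have hmne : m ≠ i := (Finset.mem_erase.1 hm).1
          have hd : δ ≤ |x i - x m| := hsep i m (Ne.symm hmne)
          have hnum : |ξ - x m| ≤ 2 + 2 * lam := by
            have h1 := (hrange m).1
            have h2 := (hrange m).2
            rw [abs_le]; constructor <;> nlinarith
          rw [abs_div]
          rw [div_le_div_iff₀ (lt_of_lt_of_le hδ hd) hδ]
          calc |ξ - x m| * δ ≤ (2 + 2 * lam) * δ := by nlinarith [abs_nonneg (ξ - x m)]
            _ ≤ (2 + 2 * lam) * |x i - x m| := by nlinarith
      _ = M ^ p := by rw [Finset.prod_const, hcard]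
  have h1 : (∑ i, u i * lagrangeBasis x i ξ) ^ 2 ≤ (∑ i, |u i| * M ^ p) ^ 2 := by
    have habs : |∑ i, u i * lagrangeBasis x i ξ| ≤ ∑ i, |u i| * M ^ p := by
      calc |∑ i, u i * lagrangeBasis x i ξ| ≤ ∑ i, |u i * lagrangeBasis x i ξ| :=
            Finset.abs_sum_le_sum_abs _ _
        _ ≤ ∑ i, |u i| * M ^ p := by
            apply Finset.sum_le_sum
            intro i _
            rw [abs_mul]
            exact mul_le_mul_of_nonneg_left (hlb i) (abs_nonneg _)
    calc (∑ i, u i * lagrangeBasis x i ξ) ^ 2 = |∑ i, u i * lagrangeBasis x i ξ| ^ 2 := (sq_abs _).symm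
      _ ≤ (∑ i, |u i| * M ^ p) ^ 2 := by
          apply pow_le_pow_left₀ (abs_nonneg _) habs
  have h2 : (∑ i, |u i| * M ^ p) ^ 2 = (M ^ p) ^ 2 * (∑ i, |u i|) ^ 2 := by
    rw [← Finset.sum_mul, mul_pow]; ring
  have h3 : (∑ i, |u i|) ^ 2 ≤ ((p : ℝ) + 1) * ∑ i, u i ^ 2 := by
    have := sq_sum_le_card_mul_sum_sq (s := (Finset.univ : Finset (Fin (p+1)))) (f := fun i => |u i|)
    simp only [Finset.card_univ, Fintype.card_fin, sq_abs] at this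
    convert this using 2
    · rfl
    push_cast; ring
  have h4 : ∑ i, u i ^ 2 ≤ (1 / mw) * ∑ i, ω i * u i ^ 2 := by
    rw [Finset.mul_sum]
    apply Finset.sum_le_sum
    intro i _
    rw [one_div, ← div_eq_inv_mul, le_div_iff₀ hmw]
    nlinarith [hω i, sq_nonneg (u i)]
  have hsum0 : 0 ≤ ∑ i, ω i * u i ^ 2 :=
    Finset.sum_nonneg fun i _ => mul_nonneg (le_trans hmw.le (hω i)) (sq_nonneg _)
  have hMpp : (M ^ p) ^ 2 = M ^ (2 * p) := by rw [← pow_mul, mul_comm]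
  calc (∑ i, u i * lagrangeBasis x i ξ) ^ 2 ≤ (M ^ p) ^ 2 * (∑ i, |u i|) ^ 2 := by rw [← h2]; exact h1
    _ ≤ (M ^ p) ^ 2 * (((p : ℝ) + 1) * ∑ i, u i ^ 2) := by
        apply mul_le_mul_of_nonneg_left h3 (sq_nonneg _)
    _ ≤ (M ^ p) ^ 2 * (((p : ℝ) + 1) * ((1 / mw) * ∑ i, ω i * u i ^ 2)) := by
        apply mul_le_mul_of_nonneg_left _ (sq_nonneg _)
        apply mul_le_mul_of_nonneg_left h4 (by positivity)
    _ = (((p : ℝ) + 1) / mw) * M ^ (2 * p) * ∑ i, ω i * u i ^ 2 := by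
        rw [hMpp]; ring
end
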